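/- arXiv:1106.0874 — 4 statements merged into one kernel-verified Lean document; each statement's English description precedes it below -/
import Mathlib

section
/- A finite family of 2-state characters on a finite set of taxa has a perfect phylogeny if and only if every two characters of the family have a perfect phylogeny. -/
/-- A perfect phylogeny for a family of `k`-state characters `chars` (indexed by `F`)
on a finite set of taxa `X`: a finite tree `T` with a labeling `ℓ` of its vertices by
full state-assignments, such that every taxon's state-assignment occurs at some vertex,
and for each character and state the vertices carrying that state induce a connected
subgraph of `T`. -/
def PerfectPhylogeny {X F : Type} [Fintype X] [Fintype F] (k : ℕ)
    (chars : F → X → Fin k) : Prop :=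
  ∃ (V : Type) (_ : Fintype V) (T : SimpleGraph V) (ℓ : V → F → Fin k),
    T.IsTree ∧
    (∀ x : X, ∃ v : V, ∀ f : F, ℓ v f = chars f x) ∧
    ∀ (f : F) (s : Fin k), (T.induce {v : V | ℓ v f = s}).Preconnected

/-- Two characters `a, b` have a perfect phylogeny (as a two-member family). -/
def PairPP {X : Type} [Fintype X] (k : ℕ) (a b : X → Fin k) : Prop :=
  PerfectPhylogeny k ![a, b]

/-- The subfamily of `chars` indexed by the finite set `S` has a perfect phylogeny. -/
def SubPP {X F : Type} [Fintype X] [Fintype F] (k : ℕ) (chars : F → X → Fin k)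
    (S : Finset F) : Prop :=
  PerfectPhylogeny k (fun f : {x // x ∈ S} => chars f.1)

/-- A family of characters is pairwise compatible if every two of its characters
have a perfect phylogeny. -/
def PairwiseCompatible {X F : Type} [Fintype X] [Fintype F] (k : ℕ)
    (chars : F → X → Fin k) : Prop :=
  ∀ a b : F, a ≠ b → PairPP k (chars a) (chars b)

/-- The partition intersection graph of two characters `a, b`.  The vertex `(false, i)`
represents state `i` of `a` and `(true, j)` represents state `j` of `b`; there is an
edge between `(false, i)` and `(true, j)` exactly when some taxon has state `i` for `a`
and state `j` for `b`, and no edges between vertices of the same character. -/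
def pig {X : Type} {k : ℕ} (a b : X → Fin k) : SimpleGraph (Bool × Fin k) where
  Adj u v :=
    (u.1 = false ∧ v.1 = true ∧ ∃ x, a x = u.2 ∧ b x = v.2) ∨
    (u.1 = true ∧ v.1 = false ∧ ∃ x, a x = v.2 ∧ b x = u.2)
  symm := by
    constructor
    rintro ⟨ub, us⟩ ⟨vb, vs⟩ (⟨h1, h2, x, hx⟩ | ⟨h1, h2, x, hx⟩) <;>
      subst h1 <;> subst h2
    · exact Or.inr ⟨rfl, rfl, x, hx⟩
    · exact Or.inl ⟨rfl, rfl, x, hx⟩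
  loopless := by
    constructor
    rintro ⟨ub, us⟩ (⟨h1, h2, -⟩ | ⟨h1, h2, -⟩) <;> simp_all

/-- The binarized character `c(i)` of a 3-state character `c`: state `0` on taxa
where `c` has state `i`, and state `1` elsewhere. -/
def bin {X : Type} (c : X → Fin 3) (i : Fin 3) : X → Fin 2 :=
  fun x => if c x = i then 0 else 1

/-- State `i` of character `c` (of the family `chars`) is dependent: some character `d`
has two distinct states `j, k` such that `c(i)` is incompatible with both `d(j)` and `d(k)`. -/
def DependentState {X F : Type} [Fintype X] [Fintype F] (chars : F → X → Fin 3)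
    (c : F) (i : Fin 3) : Prop :=
  ∃ (d : F) (j k : Fin 3), j ≠ k ∧
    ¬ PairPP 2 (bin (chars c) i) (bin (chars d) j) ∧
    ¬ PairPP 2 (bin (chars c) i) (bin (chars d) k)

/-- `d` is a witness that state `i` of `c` is dependent. -/
def WitnessOf {X F : Type} [Fintype X] [Fintype F] (chars : F → X → Fin 3)
    (c : F) (i : Fin 3) (d : F) : Prop :=
  ∃ j k : Fin 3, j ≠ k ∧
    ¬ PairPP 2 (bin (chars c) i) (bin (chars d) j) ∧
    ¬ PairPP 2 (bin (chars c) i) (bin (chars d) k)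

/-- The graph `G` contains a path of length four (five pairwise distinct vertices,
four edges) whose middle vertex is `m`. -/
def HasPathLen4Mid {V : Type} (G : SimpleGraph V) (m : V) : Prop :=
  ∃ p : Fin 5 → V, Function.Injective p ∧
    (∀ t : Fin 4, G.Adj (p t.castSucc) (p t.succ)) ∧ p 2 = m

/-- Some taxon realizes the pair of states `(i, j)` for the pair of characters `(u, v)`. -/
def realizes {X : Type} (u v : X → Fin 3) (i j : Fin 3) : Prop :=
  ∃ t, u t = i ∧ v t = j

/-!
Restricting a perfect phylogeny to two characters gives one for the pair, so only the converse
needs an argument. Root the taxa at some `x₀` and record each binary character by the side of its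
split that avoids `x₀`. A perfect phylogeny of two binary characters cannot realise all four state
pairs (the four-gamete test): each state class of the second character would contain an edge
leaving the `0`-class of the first, while in a tree two complementary connected vertex sets are
joined by at most one edge. So for pairwise compatible characters the split sides, together with
the set of all taxa, form a laminar family. The Hasse diagram of a laminar family with a top
element is a tree, and labelling each cluster by whether it lies inside each split side gives a
perfect phylogeny: the clusters inside a side form a down-set with a greatest element, those not
inside it an up-set containing the top, and both induce subtrees.
-/

open Finset

namespace SimpleGraph

variable {V α : Type*}

section Hasse

variable [PartialOrder α]

theorem hasse_induce_reachable_of_le [Finite α] {S : Set α} {a b : α} (hab : a ≤ b)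
    (hS : Set.Icc a b ⊆ S) :
    ((hasse α).induce S).Reachable ⟨a, hS ⟨le_rfl, hab⟩⟩ ⟨b, hS ⟨hab, le_rfl⟩⟩ := by
  induction a using WellFoundedGT.induction with
  | _ a ih =>
    obtain rfl | hlt := hab.eq_or_lt
    · rfl
    obtain ⟨c, hac, hcb⟩ := exists_covBy_le_of_lt hlt
    have hcS : Set.Icc c b ⊆ S := (Set.Icc_subset_Icc_left hac.le).trans hS
    have hadj : ((hasse α).induce S).Adj ⟨a, hS ⟨le_rfl, hab⟩⟩ ⟨c, hcS ⟨le_rfl, hcb⟩⟩ :=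
      Or.inl hac
    exact hadj.reachable.trans (ih c hac.lt hcb hcS)

theorem hasse_induce_preconnected [Finite α] {S : Set α} (t : α)
    (h : ∀ a ∈ S, a ≤ t ∧ Set.Icc a t ⊆ S) : ((hasse α).induce S).Preconnected := by
  rintro ⟨a, ha⟩ ⟨b, hb⟩
  exact (hasse_induce_reachable_of_le (h a ha).1 (h a ha).2).trans
    (hasse_induce_reachable_of_le (h b hb).1 (h b hb).2).symm

theorem hasse_connected [Finite α] [OrderTop α] : (hasse α).Connected := by
  have hreach (a : α) : (hasse α).Reachable a ⊤ :=
    (hasse_induce_reachable_of_le le_top (Set.subset_univ _)).map (Embedding.induce _).toHom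
  exact ⟨fun a b => (hreach a).trans (hreach b).symm⟩

theorem hasse_isAcyclic (h : ∀ a : α, IsChain (· ≤ ·) (Set.Ici a)) : (hasse α).IsAcyclic := by
  suffices hbridge : ∀ ⦃a c : α⦄, a ⋖ c → (hasse α).IsBridge s(a, c) by
    rw [isAcyclic_iff_forall_adj_isBridge]
    rintro a c (hac | hca)
    · exact hbridge hac
    · exact Sym2.eq_swap ▸ hbridge hca
  intro a c hac ⟨w⟩
  -- a walk from `a` to `c` avoiding the edge `ac` must leave `Iic a` along another edge
  obtain ⟨d, -, hd, hd'⟩ := w.exists_boundary_dart (Set.Iic a) le_rfl hac.lt.not_ge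
  obtain ⟨hcov | hcov, hne⟩ := deleteEdges_adj.1 d.adj
  · rcases (h d.fst).total hd hcov.le with hae | hea
    · obtain hda | hda := hd.eq_or_lt
      · rw [hda] at hcov hne
        have hdc : d.snd = c := by
          rcases (h a).total hcov.le hac.le with hec | hce
          · exact (hac.eq_or_eq hcov.le hec).resolve_left hcov.lt.ne'
          · exact ((hcov.eq_or_eq hac.le hce).resolve_left hac.lt.ne').symm
        exact hne (by rw [hdc]; rfl)
      · exact hcov.2 hda (hae.lt_of_ne fun hae => hd' hae.ge)
    · exact hd' hea
  · exact hd' (hcov.le.trans hd)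

theorem hasse_isTree [Finite α] [OrderTop α] (h : ∀ a : α, IsChain (· ≤ ·) (Set.Ici a)) :
    (hasse α).IsTree :=
  ⟨hasse_connected, hasse_isAcyclic h⟩

end Hasse

section Cut

variable {G : SimpleGraph V} {S : Set V}

theorem Preconnected.exists_adj_mem_notMem {R : Set V} (hR : (G.induce R).Preconnected)
    {u v : V} (hu : u ∈ R) (hv : v ∈ R) (huS : u ∈ S) (hvS : v ∉ S) :
    ∃ x ∈ R, ∃ y ∈ R, x ∈ S ∧ y ∉ S ∧ G.Adj x y := by
  obtain ⟨w⟩ := hR ⟨u, hu⟩ ⟨v, hv⟩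
  obtain ⟨d, -, hd, hd'⟩ := w.exists_boundary_dart {x | x.1 ∈ S} huS hvS
  exact ⟨_, d.fst.2, _, d.snd.2, hd, hd', d.adj⟩

theorem Preconnected.reachable_deleteEdges_of_exists_notMem (hS : (G.induce S).Preconnected)
    {u v : V} (hu : u ∈ S) (hv : v ∈ S) {e : Sym2 V} (he : ∃ z ∈ e, z ∉ S) :
    (G.deleteEdges {e}).Reachable u v := by
  obtain ⟨w⟩ := hS ⟨u, hu⟩ ⟨v, hv⟩
  refine ⟨w.map ⟨Subtype.val, fun {a b} hab => deleteEdges_adj.2 ⟨hab, ?_⟩⟩⟩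
  rintro rfl
  obtain ⟨z, hz, hzS⟩ := he
  rcases Sym2.mem_iff.1 hz with rfl | rfl
  exacts [hzS a.2, hzS b.2]

theorem IsAcyclic.eq_of_adj_of_induce_preconnected (hG : G.IsAcyclic)
    (hS : (G.induce S).Preconnected) (hSc : (G.induce Sᶜ).Preconnected) {x x' y y' : V}
    (hx : x ∈ S) (hx' : x' ∈ S) (hy : y ∉ S) (hy' : y' ∉ S) (hxy : G.Adj x y)
    (hxy' : G.Adj x' y') : x = x' := by
  by_contra hne
  have hadj : (G.deleteEdges {s(x, y)}).Adj x' y' := by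
    refine deleteEdges_adj.2 ⟨hxy', fun he => ?_⟩
    rcases Sym2.eq_iff.1 (Set.mem_singleton_iff.1 he) with ⟨rfl, -⟩ | ⟨rfl, -⟩
    exacts [hne rfl, hy hx']
  refine isAcyclic_iff_forall_adj_isBridge.1 hG hxy ?_
  have hxx' := hS.reachable_deleteEdges_of_exists_notMem hx hx' ⟨y, Sym2.mem_mk_right x y, hy⟩
  have hy'y := hSc.reachable_deleteEdges_of_exists_notMem hy' hy
    ⟨x, Sym2.mem_mk_left x y, fun hxc => hxc hx⟩
  exact (hxx'.trans hadj.reachable).trans hy'y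

end Cut

end SimpleGraph

open SimpleGraph

section Phylogeny

variable {X F : Type} [Fintype X] [Fintype F]

theorem PerfectPhylogeny.comp {G : Type} [Fintype G] {k : ℕ} {chars : F → X → Fin k}
    (h : PerfectPhylogeny k chars) (ι : G → F) : PerfectPhylogeny k (chars ∘ ι) := by
  obtain ⟨V, hV, T, ℓ, hT, htaxa, hconv⟩ := h
  exact ⟨V, hV, T, fun v g => ℓ v (ι g), hT, fun x => (htaxa x).imp fun v hv g => hv (ι g),
    fun g => hconv (ι g)⟩

theorem PerfectPhylogeny.pairPP {k : ℕ} {chars : F → X → Fin k} (h : PerfectPhylogeny k chars)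
    (a b : F) : PairPP k (chars a) (chars b) := by
  have hpair : ![chars a, chars b] = chars ∘ ![a, b] := by
    ext i : 1
    fin_cases i <;> rfl
  rw [PairPP, hpair]
  exact h.comp _

theorem perfectPhylogeny_of_isEmpty [IsEmpty X] {k : ℕ} [NeZero k] (chars : F → X → Fin k) :
    PerfectPhylogeny k chars :=
  ⟨Unit, inferInstance, ⊥, fun _ _ => 0, .of_subsingleton, isEmptyElim,
    fun _ _ => .of_subsingleton⟩

theorem not_pairPP_of_four_gametes {a b : X → Fin 2} (h : ∀ s t, ∃ x, a x = s ∧ b x = t) :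
    ¬ PairPP 2 a b := by
  rintro ⟨V, -, T, ℓ, hT, htaxa, hconv⟩
  have hvert (s t : Fin 2) : ∃ v, ℓ v 0 = s ∧ ℓ v 1 = t := by
    obtain ⟨x, rfl, rfl⟩ := h s t
    obtain ⟨v, hv⟩ := htaxa x
    exact ⟨v, hv 0, hv 1⟩
  set S : Set V := {v | ℓ v 0 = 0}
  have hSc : Sᶜ = {v | ℓ v 0 = 1} := by
    ext v
    simp only [S, Set.mem_compl_iff, Set.mem_ofPred_eq]
    omega
  -- each state of `b` has an edge leaving `S` inside its (connected) state class
  have hcross (t : Fin 2) : ∃ x y, ℓ x 1 = t ∧ x ∈ S ∧ y ∉ S ∧ T.Adj x y := by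
    obtain ⟨u, hu0, hu1⟩ := hvert 0 t
    obtain ⟨v, hv0, hv1⟩ := hvert 1 t
    obtain ⟨x, hx, y, -, hxS, hyS, hxy⟩ :=
      (hconv 1 t).exists_adj_mem_notMem (S := S) hu1 hv1 hu0 (by simp [S, hv0])
    exact ⟨x, y, hx, hxS, hyS, hxy⟩
  obtain ⟨x, y, hx, hxS, hyS, hxy⟩ := hcross 0
  obtain ⟨x', y', hx', hxS', hyS', hxy'⟩ := hcross 1
  have hxx' := hT.isAcyclic.eq_of_adj_of_induce_preconnected (hconv 0 0) (hSc ▸ hconv 0 1)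
    hxS hxS' hyS hyS' hxy hxy'
  exact absurd (hx.symm.trans (hxx' ▸ hx')) (by decide)

end Phylogeny

section Laminar

variable {X : Type*}

def IsLaminar (𝒞 : Set (Finset X)) : Prop :=
  ∀ A ∈ 𝒞, ∀ B ∈ 𝒞, ∀ x ∈ A, x ∈ B → A ⊆ B ∨ B ⊆ A

variable {𝒞 : Set (Finset X)}

theorem IsLaminar.isChain_Ici (h : IsLaminar 𝒞) (hne : ∀ A ∈ 𝒞, A.Nonempty) (A : 𝒞) :
    IsChain (· ≤ ·) (Set.Ici A) := by
  intro B hB C hC _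
  obtain ⟨x, hx⟩ := hne A A.2
  exact h B B.2 C C.2 x (hB hx) (hC hx)

theorem IsLaminar.exists_forall_mem_iff_le (h : IsLaminar 𝒞) {x : X} (hx : ∃ A ∈ 𝒞, x ∈ A) :
    ∃ M : 𝒞, ∀ C : 𝒞, x ∈ C.1 ↔ M ≤ C := by
  obtain ⟨M, ⟨hM, hxM⟩, hmin⟩ := wellFounded_lt.has_min {A | A ∈ 𝒞 ∧ x ∈ A} hx
  refine ⟨⟨M, hM⟩, fun C => ⟨fun hxC => ?_, fun hMC => hMC hxM⟩⟩
  rcases h M hM C C.2 x hxM hxC with hMC | hCM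
  · exact hMC
  · obtain rfl | hlt := hCM.eq_or_ssubset
    · exact le_rfl
    · exact absurd hlt (hmin C ⟨C.2, hxC⟩)

end Laminar

theorem Fin.setOf_ite_one_sub_eq {α : Type*} (p : α → Prop) [DecidablePred p] (s t : Fin 2) :
    {a | (if p a then 1 - t else t) = s} = {a | p a} ∨
      {a | (if p a then 1 - t else t) = s} = {a | ¬ p a} := by
  have hflip : 1 - t ≠ t := by omega
  rcases eq_or_ne s t with rfl | hst
  · right
    ext a
    by_cases hp : p a <;> simp [hp, hflip]
  · have hs : 1 - t = s := by omega
    left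
    ext a
    by_cases hp : p a <;> simp [hp, hs, Ne.symm hst]

section SplitSide

variable {X F : Type} [Fintype X] {k : ℕ}

def splitSide (c : X → Fin k) (x₀ : X) : Finset X :=
  {x | c x ≠ c x₀}

@[simp]
theorem mem_splitSide {c : X → Fin k} {x₀ x : X} : x ∈ splitSide c x₀ ↔ c x ≠ c x₀ := by
  simp [splitSide]

theorem ite_mem_splitSide (c : X → Fin 2) (x₀ x : X) [Decidable (x ∈ splitSide c x₀)] :
    (if x ∈ splitSide c x₀ then 1 - c x₀ else c x₀) = c x := by
  split_ifs with hx <;> rw [mem_splitSide] at hx <;> omega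

theorem PairPP.splitSide_subset_or_subset {a b : X → Fin 2} (h : PairPP 2 a b) {x₀ x : X}
    (ha : x ∈ splitSide a x₀) (hb : x ∈ splitSide b x₀) :
    splitSide a x₀ ⊆ splitSide b x₀ ∨ splitSide b x₀ ⊆ splitSide a x₀ := by
  by_contra! hn
  obtain ⟨y, hya, hyb⟩ := not_subset.1 hn.1
  obtain ⟨z, hzb, hza⟩ := not_subset.1 hn.2
  simp only [mem_splitSide, ne_eq, not_not] at ha hb hya hyb hzb hza
  refine not_pairPP_of_four_gametes (fun s t => ?_) h
  rcases eq_or_ne s (a x₀) with rfl | hs <;> rcases eq_or_ne t (b x₀) with rfl | ht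
  · exact ⟨x₀, rfl, rfl⟩
  · exact ⟨z, hza, by omega⟩
  · exact ⟨y, by omega, hyb⟩
  · exact ⟨x, by omega, by omega⟩

def clusters (chars : F → X → Fin k) (x₀ : X) : Set (Finset X) :=
  {A | A = univ ∨ (∃ f, A = splitSide (chars f) x₀) ∧ A.Nonempty}

theorem isLaminar_clusters {chars : F → X → Fin 2} (x₀ : X)
    (h : ∀ a b, a ≠ b → PairPP 2 (chars a) (chars b)) : IsLaminar (clusters chars x₀) := by
  rintro A (rfl | ⟨⟨a, rfl⟩, -⟩) B (rfl | ⟨⟨b, rfl⟩, -⟩) x hxA hxB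
  · exact Or.inl subset_rfl
  · exact Or.inr (subset_univ _)
  · exact Or.inl (subset_univ _)
  · obtain rfl | hab := eq_or_ne a b
    · exact Or.inl subset_rfl
    · exact (h a b hab).splitSide_subset_or_subset hxA hxB

theorem perfectPhylogeny_of_isLaminar_clusters [Fintype F] (chars : F → X → Fin 2) (x₀ : X)
    (h : IsLaminar (clusters chars x₀)) : PerfectPhylogeny 2 chars := by
  classical
  set 𝒞 := clusters chars x₀
  have hne : ∀ A ∈ 𝒞, A.Nonempty := by
    rintro A (rfl | ⟨-, hA⟩)
    exacts [⟨x₀, mem_univ _⟩, hA]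
  have hside (f : F) (hf : (splitSide (chars f) x₀).Nonempty) : splitSide (chars f) x₀ ∈ 𝒞 :=
    Or.inr ⟨⟨f, rfl⟩, hf⟩
  let _ : OrderTop 𝒞 := { top := ⟨univ, Or.inl rfl⟩, le_top := fun A => subset_univ A.1 }
  choose M hM using fun x => h.exists_forall_mem_iff_le ⟨univ, Or.inl rfl, mem_univ x⟩
  refine ⟨𝒞, Fintype.ofFinite _, hasse 𝒞,
    fun A f => if A.1 ⊆ splitSide (chars f) x₀ then 1 - chars f x₀ else chars f x₀,
    hasse_isTree (h.isChain_Ici hne), fun x => ⟨M x, fun f => ?_⟩, fun f s => ?_⟩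
  · have hMx : (M x).1 ⊆ splitSide (chars f) x₀ ↔ x ∈ splitSide (chars f) x₀ :=
      ⟨fun hs => hs ((hM x (M x)).2 le_rfl), fun hx => (hM x ⟨_, hside f ⟨x, hx⟩⟩).1 hx⟩
    simp only [hMx]
    exact ite_mem_splitSide _ _ _
  · rcases Fin.setOf_ite_one_sub_eq (fun A : 𝒞 => A.1 ⊆ splitSide (chars f) x₀) s (chars f x₀)
      with hs | hs <;> rw [hs]
    · by_cases hf : (splitSide (chars f) x₀).Nonempty
      · exact hasse_induce_preconnected ⟨_, hside f hf⟩ fun A hA => ⟨hA, fun C hC => hC.2⟩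
      · exact hasse_induce_preconnected ⊤ fun A hA => absurd ((hne A A.2).mono hA) hf
    · exact hasse_induce_preconnected ⊤ fun A hA =>
        ⟨le_top, fun C hC hCf => hA (Subset.trans hC.1 hCf)⟩

end SplitSide

/-- A finite family of 2-state characters has a perfect phylogeny iff every
two characters of the family have a perfect phylogeny. -/
theorem two_state_pp_iff_pairwise {X F : Type} [Fintype X] [Fintype F]
    (chars : F → X → Fin 2) :
    PerfectPhylogeny 2 chars ↔ ∀ a b : F, a ≠ b → PairPP 2 (chars a) (chars b) := by
  refine ⟨fun h a b _ => h.pairPP a b, fun h => ?_⟩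
  rcases isEmpty_or_nonempty X with hX | ⟨⟨x₀⟩⟩
  · exact perfectPhylogeny_of_isEmpty chars
  · exact perfectPhylogeny_of_isLaminar_clusters chars x₀ (isLaminar_clusters x₀ h)
end

section
/- (Estabrook–McMorris) Two 3-state characters a and b on a finite set of taxa X have a perfect phylogeny if and only if the partition intersection graph of a and b is acyclic. -/
/-!
In a perfect phylogeny the states of each character occupy subtrees. Suppose the partition
intersection graph had a cycle through a state `v` of one character, with neighbours `u ≠ w`
on the cycle. Pick a tree vertex in the subtrees of `v` and `u`, and one in those of `v` and
`w`. They are joined inside the subtree of `v`, and also through the subtrees of the states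
of the cycle other than `v`. In a forest the path between two vertices lies in every route
between them, so each edge of that path lies in the subtree of `v` and in the subtree of some
other state of the cycle, necessarily a state of the other character; hence the other
character is constant along the path, contradicting `u ≠ w`.

Conversely, an acyclic intersection graph extends to a spanning tree of the complete
bipartite graph on the states. Root it and label each state by itself together with the state
of its parent: every taxon is read off a tree edge, and the vertices carrying a given state of
a character form a star around that state.
-/

open SimpleGraph

namespace SimpleGraph

variable {V ι α : Type*} {G T : SimpleGraph V}

theorem Reachable.apply_eq_of_forall_adj {f : V → α} (hf : ∀ ⦃p q⦄, G.Adj p q → f p = f q)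
    {u v : V} (h : G.Reachable u v) : f u = f v := by
  obtain ⟨W⟩ := h
  induction W with
  | nil => rfl
  | cons hadj _ ih => exact (hf hadj).trans ih

theorem preconnected_induce_of_forall_adj {s : Set V} {c : V} (hc : c ∈ s)
    (h : ∀ v ∈ s, v ≠ c → G.Adj v c) : (G.induce s).Preconnected := by
  have toCenter : ∀ v : s, (G.induce s).Reachable v ⟨c, hc⟩ := fun v => by
    by_cases hv : v.1 = c
    · rw [show v = ⟨c, hc⟩ from Subtype.ext hv]
    · exact Adj.reachable (h v v.2 hv)
  exact fun u v => (toCenter u).trans (toCenter v).symm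

theorem isAcyclic_of_forall_mem_support
    (h : ∀ ⦃v u w : V⦄, G.Adj v u → G.Adj v w → u ≠ w → ∀ W : G.Walk u w, v ∈ W.support) :
    G.IsAcyclic := by
  intro v c hc
  have hnil := hc.not_nil
  have htail : ¬ c.tail.Nil := by
    rw [← Walk.length_eq_zero_iff, Walk.length_tail]; have := hc.three_le_length; omega
  have hpen : c.tail.penultimate = c.penultimate := by
    conv_rhs => rw [← c.cons_tail_eq hnil]
    rw [Walk.penultimate_cons_of_not_nil _ _ htail]
  have hv : v ∉ c.tail.dropLast.support := by
    have := hc.isPath_tail.support_nodup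
    rw [← Walk.support_dropLast_concat htail] at this
    exact fun hmem => List.disjoint_of_nodup_append this hmem (List.mem_singleton_self v)
  exact hv <| h (c.adj_snd hnil) (c.tail.adj_penultimate htail).symm
    (hpen ▸ hc.snd_ne_penultimate) c.tail.dropLast

theorem IsAcyclic.reachable_inf (hT : T.IsAcyclic) {G₁ G₂ : SimpleGraph V} (h₁ : G₁ ≤ T)
    (h₂ : G₂ ≤ T) {u v : V} (r₁ : G₁.Reachable u v) (r₂ : G₂.Reachable u v) :
    (G₁ ⊓ G₂).Reachable u v := by
  obtain ⟨p₁, hp₁⟩ := r₁.exists_isPath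
  obtain ⟨p₂, hp₂⟩ := r₂.exists_isPath
  have hp : p₁.mapLe h₁ = p₂.mapLe h₂ := congrArg Subtype.val <|
    (hT.subsingleton_path u v).elim ⟨_, hp₁.mapLe h₁⟩ ⟨_, hp₂.mapLe h₂⟩
  refine ⟨p₁.transfer _ fun e he => ?_⟩
  rw [edgeSet_inf]
  refine ⟨p₁.edges_subset_edgeSet he, ?_⟩
  rw [← Walk.edges_mapLe_eq_edges h₁, hp, Walk.edges_mapLe_eq_edges] at he
  exact p₂.edges_subset_edgeSet he

theorem spanningCoe_induce_adj {s : Set V} {p q : V} :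
    (T.induce s).spanningCoe.Adj p q ↔ T.Adj p q ∧ p ∈ s ∧ q ∈ s := by
  rw [map_adj]
  constructor
  · rintro ⟨⟨p, hp⟩, ⟨q, hq⟩, h, rfl, rfl⟩
    exact ⟨h, hp, hq⟩
  · rintro ⟨h, hp, hq⟩
    exact ⟨⟨p, hp⟩, ⟨q, hq⟩, h, rfl, rfl⟩

theorem Preconnected.reachable_spanningCoe {s : Set V} (h : (T.induce s).Preconnected)
    {p q : V} (hp : p ∈ s) (hq : q ∈ s) : (T.induce s).spanningCoe.Reachable p q :=
  (h ⟨p, hp⟩ ⟨q, hq⟩).map (Embedding.spanningCoe _).toHom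

theorem Walk.reachable_iSup_spanningCoe {H : SimpleGraph ι} {cls : ι → Set V}
    (hcls : ∀ c, (T.induce (cls c)).Preconnected)
    (hH : ∀ ⦃c d⦄, H.Adj c d → (cls c ∩ cls d).Nonempty) {c d : ι} (W : H.Walk c d)
    {x y : V} (hx : x ∈ cls c) (hy : y ∈ cls d) :
    (⨆ e ∈ W.support, (T.induce (cls e)).spanningCoe).Reachable x y := by
  induction W generalizing x with
  | nil =>
    refine ((hcls _).reachable_spanningCoe hx hy).mono ?_
    exact le_iSup₂_of_le (f := fun e (_ : e ∈ [_]) => (T.induce (cls e)).spanningCoe) _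
      (List.mem_singleton_self _) le_rfl
  | @cons c m d hcm W ih =>
    obtain ⟨z, hzc, hzm⟩ := hH hcm
    refine (((hcls c).reachable_spanningCoe hx hzc).mono ?_).trans ((ih hzm hy).mono ?_)
    · exact le_iSup₂_of_le (f := fun e (_ : e ∈ (Walk.cons hcm W).support) =>
        (T.induce (cls e)).spanningCoe) c W.support.mem_cons_self le_rfl
    · exact biSup_mono fun e he => List.mem_cons_of_mem _ he

theorem connected_comap_fst_top [Nonempty α] :
    ((⊤ : SimpleGraph Bool).comap (Prod.fst : Bool × α → Bool)).Connected := by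
  refine (connected_iff _).2 ⟨fun u v => ?_, inferInstance⟩
  by_cases h : u.1 = v.1
  · have hu : u.1 ≠ !v.1 := h ▸ Bool.self_ne_not _
    exact (Adj.reachable (v := (!v.1, v.2)) hu).trans
      (Adj.reachable (Bool.self_ne_not v.1).symm)
  · exact Adj.reachable h

theorem IsTree.exists_parent [Nontrivial V] (hT : T.IsTree) :
    ∃ p : V → V, (∀ v, T.Adj v (p v)) ∧ ∀ ⦃u w⦄, T.Adj u w → p u = w ∨ p w = u := by
  classical
  obtain ⟨r⟩ := hT.connected.nonempty
  obtain ⟨r', hr'⟩ := hT.connected.preconnected.exists_adj_of_nontrivial r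
  choose P hP _ using hT.existsUnique_path r
  set p : V → V := fun v => if v = r then r' else (P v).penultimate
  have hp : ∀ ⦃x y⦄, T.Adj x y → x ∈ (P y).support → p y = x := by
    intro x y hxy hx
    have hy : y ≠ r := by
      rintro rfl
      rw [Walk.eq_nil_iff_nil.2 (Walk.isPath_iff_nil.1 (hP y)), Walk.support_nil,
        List.mem_singleton] at hx
      exact hxy.ne hx
    simp only [p, hy, if_false]
    exact (hT.isAcyclic.eq_penultimate_of_adj_end (hP y) hxy.symm hx).symm
  refine ⟨p, fun v => ?_, fun u w huw => ?_⟩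
  · by_cases hv : v = r
    · simpa [p, hv] using hr'
    · simpa [p, hv] using ((P v).adj_penultimate (Walk.not_nil_of_ne (Ne.symm hv))).symm
  · by_cases hw : w ∈ (P u).support
    · exact .inl (hp huw.symm hw)
    · exact .inr (hp huw <|
        hT.isAcyclic.mem_support_of_ne_mem_support_of_adj_of_isPath (hP w) (hP u) huw.symm hw)

end SimpleGraph

section PartitionIntersectionGraph

variable {X : Type} {k : ℕ}

def pigChar (a b : X → Fin k) (c : Bool) : X → Fin k := bif c then b else a

theorem pig_adj_iff {a b : X → Fin k} {u v : Bool × Fin k} :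
    (pig a b).Adj u v ↔ u.1 ≠ v.1 ∧ ∃ x, pigChar a b u.1 x = u.2 ∧ pigChar a b v.1 x = v.2 := by
  obtain ⟨_ | _, i⟩ := u <;> obtain ⟨_ | _, j⟩ := v <;> simp [pig, pigChar, and_comm]

theorem pig_le_pig {Y : Type} {a b : X → Fin k} {a' b' : Y → Fin k}
    (h : ∀ x, ∃ y, a' y = a x ∧ b' y = b x) : pig a b ≤ pig a' b' := by
  rintro u v (⟨hu, hv, x, hxu, hxv⟩ | ⟨hu, hv, x, hxv, hxu⟩) <;> obtain ⟨y, hya, hyb⟩ := h x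
  · exact .inl ⟨hu, hv, y, hya.trans hxu, hyb.trans hxv⟩
  · exact .inr ⟨hu, hv, y, hya.trans hxv, hyb.trans hxu⟩

theorem isAcyclic_pig_of_preconnected {V : Type} {T : SimpleGraph V} (hT : T.IsAcyclic)
    {A B : V → Fin k} (hA : ∀ s, (T.induce {v | A v = s}).Preconnected)
    (hB : ∀ s, (T.induce {v | B v = s}).Preconnected) : (pig A B).IsAcyclic := by
  set cls : Bool × Fin k → Set V := fun u => {x | pigChar A B u.1 x = u.2}
  have hcls : ∀ u, (T.induce (cls u)).Preconnected := fun ⟨c, s⟩ => by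
    cases c
    exacts [hA s, hB s]
  have hpig : ∀ ⦃u w⦄, (pig A B).Adj u w → (cls u ∩ cls w).Nonempty := fun u w h =>
    (pig_adj_iff.1 h).2
  refine isAcyclic_of_forall_mem_support fun v u w hvu hvw huw W => ?_
  by_contra hv
  obtain ⟨hvu₁, y, hyv, hyu⟩ := pig_adj_iff.1 hvu
  obtain ⟨hvw₁, y', hy'v, hy'w⟩ := pig_adj_iff.1 hvw
  have hside : u.1 = w.1 := (Bool.eq_not.2 hvu₁.symm).trans (Bool.eq_not.2 hvw₁.symm).symm
  have hstate : u.2 ≠ w.2 := fun h => huw (Prod.ext hside h)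
  have hreach := hT.reachable_inf (T.spanningCoe_induce_le _) (iSup₂_le fun _ _ =>
    T.spanningCoe_induce_le _) ((hcls v).reachable_spanningCoe hyv hy'v)
    (W.reachable_iSup_spanningCoe hcls hpig hyu hy'w)
  refine hstate (hyu.symm.trans ((hreach.apply_eq_of_forall_adj fun p q hpq => ?_).trans ?_))
  -- An edge inside the class of `v` and inside a class `e ≠ v` of the walk: `e` lies on the
  -- other side, so the edge does not change the state of the other character.
  · obtain ⟨hpqv, hpqW⟩ := hpq
    simp only [iSup_adj, spanningCoe_induce_adj] at hpqv hpqW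
    obtain ⟨-, hpv, hqv⟩ := hpqv
    obtain ⟨e, he, -, hpe, hqe⟩ := hpqW
    by_cases hev : e.1 = v.1
    · exact absurd (Prod.ext hev (by rw [← hpe, ← hpv, hev]) ▸ he) hv
    · have heu : e.1 = u.1 := (Bool.eq_not.2 hev).trans (Bool.eq_not.2 hvu₁.symm).symm
      rw [← heu]
      exact hpe.trans hqe.symm
  · rw [hside]; exact hy'w

theorem isAcyclic_pig_of_pairPP [Fintype X] {a b : X → Fin k} (h : PairPP k a b) :
    (pig a b).IsAcyclic := by
  obtain ⟨V, _, T, ℓ, hT, hx, hconn⟩ := h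
  refine (isAcyclic_pig_of_preconnected (A := (ℓ · 0)) (B := (ℓ · 1)) hT.isAcyclic (hconn 0)
    (hconn 1)).anti (pig_le_pig fun x => ?_)
  obtain ⟨v, hv⟩ := hx x
  exact ⟨v, hv 0, hv 1⟩

theorem pig_le_comap_fst_top (a b : X → Fin k) :
    pig a b ≤ (⊤ : SimpleGraph Bool).comap Prod.fst :=
  fun _ _ h => (pig_adj_iff.1 h).1

def edgeState (p : Bool × Fin k → Bool × Fin k) (v : Bool × Fin k) (c : Bool) : Fin k :=
  if v.1 = c then v.2 else (p v).2

theorem preconnected_induce_edgeState {T : SimpleGraph (Bool × Fin k)}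
    (hTK : T ≤ (⊤ : SimpleGraph Bool).comap Prod.fst) {p : Bool × Fin k → Bool × Fin k}
    (hp : ∀ v, T.Adj v (p v)) (c : Bool) (s : Fin k) :
    (T.induce {v | edgeState p v c = s}).Preconnected := by
  refine preconnected_induce_of_forall_adj (c := (c, s)) (by simp [edgeState]) fun v hv hvc => ?_
  simp only [Set.mem_ofPred_eq, edgeState] at hv
  split_ifs at hv with hvc₁
  · exact absurd (Prod.ext hvc₁ hv) hvc
  · have hpv : (p v).1 = c :=
      (Bool.eq_not.2 (hTK (hp v)).symm).trans (Bool.eq_not.2 (Ne.symm hvc₁)).symm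
    exact (Prod.ext hpv hv : p v = (c, s)) ▸ hp v

theorem pairPP_of_isTree [Fintype X] {a b : X → Fin k} {T : SimpleGraph (Bool × Fin k)}
    (hT : T.IsTree) (hTK : T ≤ (⊤ : SimpleGraph Bool).comap Prod.fst) (hpig : pig a b ≤ T) :
    PairPP k a b := by
  obtain ⟨⟨c, s⟩⟩ := hT.connected.nonempty
  have : Nontrivial (Bool × Fin k) := ⟨(c, s), (!c, s), by simp⟩
  obtain ⟨p, hp, hcover⟩ := hT.exists_parent
  refine ⟨_, inferInstance, T, fun v => ![edgeState p v false, edgeState p v true], hT,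
    fun x => ?_, fun f s => ?_⟩
  · rcases hcover (hpig (.inl ⟨rfl, rfl, x, rfl, rfl⟩ : (pig a b).Adj (false, a x) (true, b x)))
      with h | h
    · exact ⟨(false, a x), by simp [Fin.forall_fin_two, edgeState, h]⟩
    · exact ⟨(true, b x), by simp [Fin.forall_fin_two, edgeState, h]⟩
  · fin_cases f
    exacts [preconnected_induce_edgeState hTK hp false s,
      preconnected_induce_edgeState hTK hp true s]

theorem pairPP_of_isAcyclic_pig [Fintype X] [NeZero k] {a b : X → Fin k}
    (h : (pig a b).IsAcyclic) : PairPP k a b := by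
  obtain ⟨T, hpigT, hTK, hT⟩ :=
    connected_comap_fst_top.exists_isTree_le_of_le_of_isAcyclic (pig_le_comap_fst_top a b) h
  exact pairPP_of_isTree hT hTK hpigT

end PartitionIntersectionGraph

/-- Estabrook–McMorris: two 3-state characters have a perfect phylogeny iff
their partition intersection graph is acyclic. -/
theorem pair_pp_iff_pig_acyclic {X : Type} [Fintype X] (a b : X → Fin 3) :
    PairPP 3 a b ↔ (pig a b).IsAcyclic :=
  ⟨isAcyclic_pig_of_pairPP, pairPP_of_isAcyclic_pig⟩
end

section
/- Let M be a pairwise compatible finite family of 3-state characters on a finite set of taxa X, let c be a character of M, and let i be a state of c. Then i is a dependent state of c if and only if there exist a character d of M and a path p1–p2–p3–p4–p5 of length four (four edges and five pairwise distinct vertices) in the partition intersection graph of c and d whose middle vertex p3 is the vertex (c, i). -/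
/-!
By the four-gamete test, two 2-state characters have a perfect phylogeny iff some pair of
states occurs at no taxon. So `c(i)` and `d(j)` are incompatible iff the patterns `(i, j)`,
`(i, ≠j)`, `(≠i, j)`, `(≠i, ≠j)` all occur. For a dependent state `i` with witnesses `j ≠ k`
this gives neighbours `(d, j)`, `(d, k)` of `(c, i)` that are adjacent to states `a`, `a'` of
`c` other than `i`. If `a = a'`, the four states span a four-cycle, which compatible `c`, `d`
cannot have: their state classes are subtrees of one tree, and subtrees of a tree never meet
like the vertices of a chordless four-cycle. Hence `a – j – i – k – a'` is a path. Conversely,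
the four edges of such a path supply all four patterns for both `c(i), d(j)` and `c(i), d(k)`.
-/

namespace SimpleGraph

variable {V : Type*} {G : SimpleGraph V}

lemma Preconnected.exists_walk_support_subset {S : Set V} (h : (G.induce S).Preconnected)
    {u v : V} (hu : u ∈ S) (hv : v ∈ S) : ∃ W : G.Walk u v, ∀ x ∈ W.support, x ∈ S := by
  obtain ⟨W⟩ := h ⟨u, hu⟩ ⟨v, hv⟩
  let f : G.induce S →g G := ⟨Subtype.val, id⟩
  refine ⟨W.map f, fun x hx => ?_⟩
  rw [Walk.support_map, List.mem_map] at hx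
  obtain ⟨y, -, rfl⟩ := hx
  exact y.2

lemma Walk.reachable_deleteEdges_of_notMem_support {u v a b : V} (W : G.Walk u v)
    (h : a ∉ W.support ∨ b ∉ W.support) : (G.deleteEdges {s(a, b)}).Reachable u v :=
  reachable_deleteEdges_iff_exists_walk.mpr ⟨W, fun he =>
    h.elim (· (W.fst_mem_support_of_mem_edges he)) (· (W.snd_mem_support_of_mem_edges he))⟩

lemma Preconnected.reachable_deleteEdges {S : Set V} (h : (G.induce S).Preconnected)
    {a b : V} (hab : a ∉ S ∨ b ∉ S) {u v : V} (hu : u ∈ S) (hv : v ∈ S) :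
    (G.deleteEdges {s(a, b)}).Reachable u v := by
  obtain ⟨W, hW⟩ := h.exists_walk_support_subset hu hv
  exact W.reachable_deleteEdges_of_notMem_support (hab.imp (mt (hW a)) (mt (hW b)))

lemma Walk.exists_adj_first_entry (P : V → Prop) :
    ∀ {u v : V} (W : G.Walk u v), ¬ P u → P v →
      ∃ a b, G.Adj a b ∧ ¬ P a ∧ P b ∧ a ∈ W.support ∧ b ∈ W.support ∧
        ∃ W' : G.Walk u a, ∀ x ∈ W'.support, ¬ P x
  | _, _, .nil, hu, hv => absurd hv hu
  | u, _, .cons (v := m) hum W, hu, hv => by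
    by_cases hm : P m
    · exact ⟨u, m, hum, hu, hm, by simp, by simp, .nil, by simpa using hu⟩
    · obtain ⟨a, b, hab, ha, hb, haW, hbW, W', hW'⟩ := W.exists_adj_first_entry P hm hv
      refine ⟨a, b, hab, ha, hb, by simp [haW], by simp [hbW], .cons hum W', ?_⟩
      simpa [hu] using hW'

theorem IsAcyclic.not_disjoint_of_cycle (hG : G.IsAcyclic) {A A' B B' : Set V}
    (hA : (G.induce A).Preconnected) (hA' : (G.induce A').Preconnected)
    (hB : (G.induce B).Preconnected) (hB' : (G.induce B').Preconnected)
    (hAB : (A ∩ B).Nonempty) (hAB' : (A ∩ B').Nonempty)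
    (hA'B : (A' ∩ B).Nonempty) (hA'B' : (A' ∩ B').Nonempty) (hBB' : Disjoint B B') :
    ¬ Disjoint A A' := by
  intro hAA'
  obtain ⟨p₁, hp₁A, hp₁B⟩ := hAB
  obtain ⟨p₂, hp₂A', hp₂B⟩ := hA'B
  obtain ⟨p₃, hp₃A', hp₃B'⟩ := hA'B'
  obtain ⟨p₄, hp₄A, hp₄B'⟩ := hAB'
  obtain ⟨W, hW⟩ := hB.exists_walk_support_subset hp₂B hp₁B
  obtain ⟨a, b, hab, haA, hbA, -, hbW, W', hW'⟩ :=
    W.exists_adj_first_entry (· ∈ A) (hAA'.notMem_of_mem_right hp₂A') hp₁A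
  -- `ab` is a bridge, yet `b, p₄, p₃, p₂, a` stay connected without it.
  let H := G.deleteEdges {s(a, b)}
  have hbp₄ : H.Reachable b p₄ := hA.reachable_deleteEdges (Or.inl haA) hbA hp₄A
  have hp₄p₃ : H.Reachable p₄ p₃ :=
    hB'.reachable_deleteEdges (Or.inr (hBB'.notMem_of_mem_left (hW b hbW))) hp₄B' hp₃B'
  have hp₃p₂ : H.Reachable p₃ p₂ :=
    hA'.reachable_deleteEdges (Or.inr (hAA'.notMem_of_mem_left hbA)) hp₃A' hp₂A'
  have hp₂a : H.Reachable p₂ a :=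
    W'.reachable_deleteEdges_of_notMem_support (Or.inr fun h => hW' b h hbA)
  exact isAcyclic_iff_forall_adj_isBridge.mp hG hab
    (hbp₄.trans hp₄p₃ |>.trans hp₃p₂ |>.trans hp₂a).symm

lemma preconnected_induce_starGraph {r : V} {S : Set V} (h : r ∈ S ∨ S.Subsingleton) :
    ((starGraph r).induce S).Preconnected := by
  rcases h with hr | hS
  · refine (Connected.of_isUniversal (G := (starGraph r).induce S) (v := ⟨r, hr⟩) ?_).preconnected
    exact fun w hw =>
      show (starGraph r).Adj r w from starGraph_center_adj fun h => hw (Subtype.ext h)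
  · have := hS.coe_sort
    exact Preconnected.of_subsingleton

end SimpleGraph

open SimpleGraph

section PerfectPhylogeny

variable {X : Type} [Fintype X]

theorem not_pairPP_of_cycle {n : ℕ} {u v : X → Fin n} {i i' j j' : Fin n} (hi : i ≠ i')
    (hj : j ≠ j') (hij : ∃ x, u x = i ∧ v x = j) (hij' : ∃ x, u x = i ∧ v x = j')
    (hi'j : ∃ x, u x = i' ∧ v x = j) (hi'j' : ∃ x, u x = i' ∧ v x = j') : ¬ PairPP n u v := by
  rintro ⟨V, _, T, ℓ, hT, hX, hconn⟩
  have hvertex {s t : Fin n} : (∃ x, u x = s ∧ v x = t) → ∃ w, ℓ w 0 = s ∧ ℓ w 1 = t := by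
    rintro ⟨x, rfl, rfl⟩
    obtain ⟨w, hw⟩ := hX x
    exact ⟨w, hw 0, hw 1⟩
  refine hT.isAcyclic.not_disjoint_of_cycle (hconn 0 i) (hconn 0 i') (hconn 1 j) (hconn 1 j')
    (hvertex hij) (hvertex hij') (hvertex hi'j) (hvertex hi'j') ?_ ?_
  · exact Set.disjoint_left.mpr fun w h h' => hj (h.symm.trans h')
  · exact Set.disjoint_left.mpr fun w h h' => hi (h.symm.trans h')

/-- The perfect phylogeny is a star on the pairs `(s, ·)` and `(·, t)`, centred at
`(s, t)`: every class not containing the centre is a single vertex. -/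
theorem pairPP_of_forall_eq_or_eq {n : ℕ} {u v : X → Fin n} (s t : Fin n)
    (h : ∀ x, u x = s ∨ v x = t) : PairPP n u v := by
  let r : {p : Fin n × Fin n // p.1 = s ∨ p.2 = t} := ⟨(s, t), Or.inl rfl⟩
  refine ⟨_, inferInstance, starGraph r, fun p => ![p.1.1, p.1.2], isTree_starGraph r,
    fun x => ⟨⟨(u x, v x), h x⟩, Fin.forall_fin_two.mpr ⟨rfl, rfl⟩⟩, fun f a => ?_⟩
  refine preconnected_induce_starGraph (or_iff_not_imp_left.mpr fun hr p hp q hq => ?_)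
  obtain ⟨⟨p₁, p₂⟩, hp'⟩ := p
  obtain ⟨⟨q₁, q₂⟩, hq'⟩ := q
  fin_cases f <;> simp_all [r] <;> grind

theorem not_pairPP_two_iff {u v : X → Fin 2} :
    ¬ PairPP 2 u v ↔ ∀ s t, ∃ x, u x = s ∧ v x = t := by
  refine ⟨fun h s t => ?_, fun h => not_pairPP_of_cycle zero_ne_one zero_ne_one
    (h 0 0) (h 0 1) (h 1 0) (h 1 1)⟩
  by_contra! hst
  have hflip : ∀ a b : Fin 2, a ≠ b → a = b + 1 := by decide
  exact h (pairPP_of_forall_eq_or_eq (s + 1) (t + 1) fun x =>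
    (em (u x = s)).elim (fun hu => .inr (hflip _ _ (hst x hu))) (fun hu => .inl (hflip _ _ hu)))

end PerfectPhylogeny

section PartitionIntersectionGraph

variable {X : Type} {n : ℕ} {u v : X → Fin n}

lemma pig_adj_false {s : Fin n} {q : Bool × Fin n} :
    (pig u v).Adj (false, s) q ↔ q.1 = true ∧ ∃ x, u x = s ∧ v x = q.2 := by
  simp [pig]

lemma pig_adj_true {t : Fin n} {q : Bool × Fin n} :
    (pig u v).Adj q (true, t) ↔ q.1 = false ∧ ∃ x, u x = q.2 ∧ v x = t := by
  simp [pig]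

theorem hasPathLen4Mid_pig_iff {i : Fin n} :
    HasPathLen4Mid (pig u v) (false, i) ↔
      ∃ s s' j j', s ≠ i ∧ s' ≠ i ∧ s ≠ s' ∧ j ≠ j' ∧
        (∃ x, u x = s ∧ v x = j) ∧ (∃ x, u x = i ∧ v x = j) ∧
        (∃ x, u x = i ∧ v x = j') ∧ (∃ x, u x = s' ∧ v x = j') := by
  constructor
  · rintro ⟨p, hp, hadj, hmid⟩
    have h₀₁ : (pig u v).Adj (p 0) (p 1) := hadj 0
    have h₁₂ : (pig u v).Adj (p 2) (p 1) := (hadj 1).symm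
    have h₂₃ : (pig u v).Adj (p 2) (p 3) := hadj 2
    have h₃₄ : (pig u v).Adj (p 4) (p 3) := (hadj 3).symm
    rw [hmid] at h₁₂ h₂₃
    obtain ⟨hp₁, hij⟩ := pig_adj_false.mp h₁₂
    obtain ⟨hp₃, hij'⟩ := pig_adj_false.mp h₂₃
    rw [← Prod.mk.eta (p := p 1), hp₁] at h₀₁
    rw [← Prod.mk.eta (p := p 3), hp₃] at h₃₄
    obtain ⟨hp₀, hsj⟩ := pig_adj_true.mp h₀₁
    obtain ⟨hp₄, hs'j'⟩ := pig_adj_true.mp h₃₄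
    have hne {a b : Fin 5} (hab : a ≠ b) (hfst : (p a).1 = (p b).1) : (p a).2 ≠ (p b).2 :=
      fun hsnd => hab (hp (Prod.ext hfst hsnd))
    refine ⟨_, _, _, _, ?_, ?_, hne (by decide) (hp₀.trans hp₄.symm),
      hne (by decide) (hp₁.trans hp₃.symm), hsj, hij, hij', hs'j'⟩
    · simpa [hmid] using hne (a := 0) (b := 2) (by decide) (by simp [hp₀, hmid])
    · simpa [hmid] using hne (a := 4) (b := 2) (by decide) (by simp [hp₄, hmid])
  · rintro ⟨s, s', j, j', hs, hs', hss', hjj', hsj, hij, hij', hs'j'⟩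
    refine ⟨![(false, s), (true, j), (false, i), (true, j'), (false, s')], ?_, ?_, rfl⟩
    · intro a b hab
      fin_cases a <;> fin_cases b <;> simp_all [eq_comm]
    · intro t
      fin_cases t
      · exact pig_adj_true.mpr ⟨rfl, hsj⟩
      · exact (pig_adj_false.mpr ⟨rfl, hij⟩).symm
      · exact pig_adj_false.mpr ⟨rfl, hij'⟩
      · exact (pig_adj_true.mpr ⟨rfl, hs'j'⟩).symm

end PartitionIntersectionGraph

section Binarization

variable {X : Type}

lemma bin_eq_zero_iff {c : X → Fin 3} {i : Fin 3} {x : X} : bin c i x = 0 ↔ c x = i := by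
  by_cases h : c x = i <;> simp [bin, h]

lemma bin_eq_one_iff {c : X → Fin 3} {i : Fin 3} {x : X} : bin c i x = 1 ↔ c x ≠ i := by
  by_cases h : c x = i <;> simp [bin, h]

theorem not_pairPP_bin_iff [Fintype X] {u v : X → Fin 3} {i j : Fin 3} :
    ¬ PairPP 2 (bin u i) (bin v j) ↔
      (∃ x, u x = i ∧ v x = j) ∧ (∃ x, u x = i ∧ v x ≠ j) ∧
        (∃ x, u x ≠ i ∧ v x = j) ∧ (∃ x, u x ≠ i ∧ v x ≠ j) := by
  simp only [not_pairPP_two_iff, Fin.forall_fin_two, bin_eq_zero_iff, bin_eq_one_iff, and_assoc]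

end Binarization

/-- for a pairwise compatible family, state `i` of character `c` is
dependent iff for some character `d` the partition intersection graph of `c` and `d`
has a path of length four whose middle vertex is `(c, i)` (encoded `(false, i)`). -/
theorem dependent_iff_path_of_length_four
    {X F : Type} [Fintype X] [Fintype F] (chars : F → X → Fin 3)
    (hpc : PairwiseCompatible 3 chars) (c : F) (i : Fin 3) :
    DependentState chars c i ↔
      ∃ d : F, HasPathLen4Mid (pig (chars c) (chars d)) (false, i) := by
  simp only [DependentState, not_pairPP_bin_iff, hasPathLen4Mid_pig_iff]
  constructor
  · rintro ⟨d, j, j', hjj', ⟨hij, -, ⟨x, hx, hxj⟩, -⟩, ⟨hij', -, ⟨y, hy, hyj'⟩, -⟩⟩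
    have hcd : c ≠ d := by
      rintro rfl
      obtain ⟨z, rfl, rfl⟩ := hij
      obtain ⟨z', hz', rfl⟩ := hij'
      exact hjj' hz'.symm
    refine ⟨d, _, _, j, j', hx, hy, fun hxy => ?_, hjj', ⟨x, rfl, hxj⟩, hij, hij', ⟨y, rfl, hyj'⟩⟩
    exact not_pairPP_of_cycle (Ne.symm hx) hjj' hij hij' ⟨x, rfl, hxj⟩ ⟨y, hxy.symm, hyj'⟩
      (hpc c d hcd)
  · rintro ⟨d, s, s', j, j', hs, hs', -, hjj', hsj, hij, hij', hs'j'⟩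
    obtain ⟨x₀, hx₀, hx₀j⟩ := hsj
    obtain ⟨x₁, hx₁, hx₁j⟩ := hij
    obtain ⟨x₂, hx₂, hx₂j'⟩ := hij'
    obtain ⟨x₃, hx₃, hx₃j'⟩ := hs'j'
    refine ⟨d, j, j', hjj', ⟨⟨x₁, hx₁, hx₁j⟩, ⟨x₂, hx₂, hx₂j' ▸ hjj'.symm⟩, ⟨x₀, hx₀ ▸ hs, hx₀j⟩,
      ⟨x₃, hx₃ ▸ hs', hx₃j' ▸ hjj'.symm⟩⟩, ⟨⟨x₂, hx₂, hx₂j'⟩, ⟨x₁, hx₁, hx₁j ▸ hjj'⟩,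
      ⟨x₃, hx₃ ▸ hs', hx₃j'⟩, ⟨x₀, hx₀ ▸ hs, hx₀j ▸ hjj'⟩⟩⟩
end

section
/- Let M be a pairwise compatible finite family of 3-state characters on a finite set of taxa X. If some character c of M has two distinct dependent states, then M has no perfect phylogeny. -/
/-!
Let state `i` of `c` be dependent, witnessed by `d(j)` and `d(k)`, and take a perfect phylogeny.
If the vertices where `c ≠ i` induced a connected subtree, exactly one tree edge would join them
to the connected `i`-class of `c`. By the four-gamete condition, the classes of `d(j)` and `d(k)`
both meet the `i`-class and its complement, so, being connected, both contain that edge, although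
they are disjoint. Hence the two other states of `c` both occur and their classes are never
adjacent. For two dependent states `i ≠ j` and the third state `m`, the `m`-class is then adjacent
neither to the `i`-class nor to the `j`-class, which disconnects the tree.
-/

namespace SimpleGraph

variable {V : Type*} {G : SimpleGraph V}

lemma induce_preconnected_of_subsingleton {S : Set V} (hS : S.Subsingleton) :
    (G.induce S).Preconnected :=
  have := hS.coe_sort
  .of_subsingleton

lemma starGraph_induce_preconnected_of_mem {r : V} {S : Set V} (hr : r ∈ S) :
    ((starGraph r).induce S).Preconnected :=
  (Connected.of_isUniversal (G := (starGraph r).induce S) (v := ⟨r, hr⟩) fun _ hw =>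
    starGraph_adj.mpr ⟨fun h => hw (Subtype.ext h), Or.inl rfl⟩).preconnected

lemma reachable_of_induce_preconnected {H : SimpleGraph V} {S : Set V}
    (hS : (G.induce S).Preconnected) (hGH : ∀ x ∈ S, ∀ y ∈ S, G.Adj x y → H.Adj x y)
    {x y : V} (hx : x ∈ S) (hy : y ∈ S) : H.Reachable x y :=
  (hS ⟨x, hx⟩ ⟨y, hy⟩).map ⟨Subtype.val, fun {u v} h => hGH _ u.2 _ v.2 h⟩

lemma exists_adj_of_induce_preconnected {D A : Set V} (hD : (G.induce D).Preconnected)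
    (hin : (D ∩ A).Nonempty) (hout : (D \ A).Nonempty) :
    ∃ a ∈ D ∩ A, ∃ b ∈ D \ A, G.Adj a b := by
  obtain ⟨x, hxD, hxA⟩ := hin
  obtain ⟨y, hyD, hyA⟩ := hout
  obtain ⟨d, -, hd, hd'⟩ := (hD ⟨x, hxD⟩ ⟨y, hyD⟩).some.exists_boundary_dart
    {v | v.1 ∈ A} hxA hyA
  exact ⟨d.fst, ⟨d.fst.2, hd⟩, d.snd, ⟨d.snd.2, hd'⟩, d.adj⟩

/-- A second edge leaving `A` would close a cycle through `A` and `Aᶜ`. -/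
lemma IsAcyclic.eq_of_adj_of_mem_of_notMem (hG : G.IsAcyclic) {A : Set V}
    (hA : (G.induce A).Preconnected) (hAc : (G.induce Aᶜ).Preconnected)
    {a₁ b₁ a₂ b₂ : V} (h₁ : G.Adj a₁ b₁) (h₂ : G.Adj a₂ b₂)
    (ha₁ : a₁ ∈ A) (ha₂ : a₂ ∈ A) (hb₁ : b₁ ∉ A) (hb₂ : b₂ ∉ A) : a₁ = a₂ := by
  by_contra hne
  apply isBridge_iff.mp (isAcyclic_iff_forall_adj_isBridge.mp hG h₂)
  have inside : ∀ x ∈ A, ∀ y ∈ A, G.Adj x y → (G.deleteEdges {s(a₂, b₂)}).Adj x y := by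
    intro x hx y hy h
    refine deleteEdges_adj.mpr ⟨h, fun he => hb₂ ?_⟩
    rcases Sym2.eq_iff.mp (Set.mem_singleton_iff.mp he) with ⟨-, rfl⟩ | ⟨rfl, -⟩ <;> assumption
  have outside : ∀ x ∈ Aᶜ, ∀ y ∈ Aᶜ, G.Adj x y → (G.deleteEdges {s(a₂, b₂)}).Adj x y := by
    intro x hx y hy h
    refine deleteEdges_adj.mpr ⟨h, fun he => ?_⟩
    rcases Sym2.eq_iff.mp (Set.mem_singleton_iff.mp he) with ⟨rfl, -⟩ | ⟨-, rfl⟩ <;>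
      contradiction
  have across : (G.deleteEdges {s(a₂, b₂)}).Adj a₁ b₁ := by
    refine deleteEdges_adj.mpr ⟨h₁, fun he => ?_⟩
    rcases Sym2.eq_iff.mp (Set.mem_singleton_iff.mp he) with ⟨rfl, -⟩ | ⟨rfl, -⟩
    exacts [hne rfl, hb₂ ha₁]
  exact (reachable_of_induce_preconnected hA inside ha₂ ha₁).trans <|
    across.reachable.trans (reachable_of_induce_preconnected hAc outside hb₁ hb₂)

lemma IsAcyclic.not_disjoint_of_crossing (hG : G.IsAcyclic) {A D₁ D₂ : Set V}
    (hA : (G.induce A).Preconnected) (hAc : (G.induce Aᶜ).Preconnected)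
    (hD₁ : (G.induce D₁).Preconnected) (hD₂ : (G.induce D₂).Preconnected)
    (hin₁ : (D₁ ∩ A).Nonempty) (hout₁ : (D₁ \ A).Nonempty)
    (hin₂ : (D₂ ∩ A).Nonempty) (hout₂ : (D₂ \ A).Nonempty) : ¬ Disjoint D₁ D₂ := by
  obtain ⟨a₁, ⟨ha₁D, ha₁⟩, b₁, ⟨-, hb₁⟩, h₁⟩ := exists_adj_of_induce_preconnected hD₁ hin₁ hout₁
  obtain ⟨a₂, ⟨ha₂D, ha₂⟩, b₂, ⟨-, hb₂⟩, h₂⟩ := exists_adj_of_induce_preconnected hD₂ hin₂ hout₂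
  obtain rfl := hG.eq_of_adj_of_mem_of_notMem hA hAc h₁ h₂ ha₁ ha₂ hb₁ hb₂
  exact Set.not_disjoint_iff.mpr ⟨a₁, ha₁D, ha₂D⟩

lemma induce_preconnected_fiber_union_of_adj {α : Type*} {f : V → α}
    (hf : ∀ s, (G.induce {v | f v = s}).Preconnected) {u w : V} (huw : G.Adj u w) :
    (G.induce {v | f v = f u ∨ f v = f w}).Preconnected :=
  (connected_induce_union (hf (f u)) (hf (f w)) rfl rfl huw).preconnected

section ThreeColouring

variable {f : V → Fin 3} {i : Fin 3}

lemma induce_preconnected_ne_of_adj (hf : ∀ s, (G.induce {v | f v = s}).Preconnected)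
    {u w : V} (huw : G.Adj u w) (hu : f u ≠ i) (hw : f w ≠ i) (hne : f u ≠ f w) :
    (G.induce {v | f v ≠ i}).Preconnected := by
  have : {v | f v ≠ i} = {v | f v = f u ∨ f v = f w} := by
    ext v
    simp only [Set.mem_ofPred_eq]
    omega
  exact this ▸ induce_preconnected_fiber_union_of_adj hf huw

lemma induce_preconnected_ne_of_forall_ne (hf : ∀ s, (G.induce {v | f v = s}).Preconnected)
    {p : Fin 3} (hpi : p ≠ i) (hp : ∀ v, f v ≠ p) :
    (G.induce {v | f v ≠ i}).Preconnected := by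
  obtain ⟨q, hqi, hqp⟩ : ∃ q : Fin 3, q ≠ i ∧ q ≠ p :=
    Fin.exists_ne_and_ne_of_two_lt i p (by norm_num)
  have : {v | f v ≠ i} = {v | f v = q} := by
    ext v
    have := hp v
    simp only [Set.mem_ofPred_eq]
    omega
  exact this ▸ hf q

end ThreeColouring

end SimpleGraph

open SimpleGraph

/-- The tree is the star on the three combinations other than `(s, t)`, centred at the
opposite one: every state class contains the centre or is a single vertex. -/
lemma pairPP_of_forall_ne {X : Type} [Fintype X] {a b : X → Fin 2} {s t : Fin 2}
    (h : ∀ x, a x = s → b x ≠ t) : PairPP 2 a b := by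
  let V := {g : Fin 2 × Fin 2 // g ≠ (s, t)}
  let r : V := ⟨(s + 1, t + 1), by simp⟩
  refine ⟨V, inferInstance, starGraph r, fun g => ![g.1.1, g.1.2], isTree_starGraph r,
    fun x => ⟨⟨(a x, b x), fun hx => h x (congrArg Prod.fst hx) (congrArg Prod.snd hx)⟩,
      fun f => by fin_cases f <;> rfl⟩, fun f q => ?_⟩
  fin_cases f
  · by_cases hq : q = s
    · refine induce_preconnected_of_subsingleton ?_
      rintro ⟨⟨x₁, y₁⟩, h₁⟩ (hx₁ : x₁ = q) ⟨⟨x₂, y₂⟩, h₂⟩ (hx₂ : x₂ = q)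
      simp only [ne_eq, Prod.mk.injEq] at h₁ h₂
      exact Subtype.ext (Prod.ext (show x₁ = x₂ by omega) (show y₁ = y₂ by omega))
    · exact starGraph_induce_preconnected_of_mem (show s + 1 = q by omega)
  · by_cases hq : q = t
    · refine induce_preconnected_of_subsingleton ?_
      rintro ⟨⟨x₁, y₁⟩, h₁⟩ (hy₁ : y₁ = q) ⟨⟨x₂, y₂⟩, h₂⟩ (hy₂ : y₂ = q)
      simp only [ne_eq, Prod.mk.injEq] at h₁ h₂
      exact Subtype.ext (Prod.ext (show x₁ = x₂ by omega) (show y₁ = y₂ by omega))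
    · exact starGraph_induce_preconnected_of_mem (show t + 1 = q by omega)

lemma exists_eq_and_eq_of_not_pairPP {X : Type} [Fintype X] {a b : X → Fin 2}
    (h : ¬ PairPP 2 a b) (s t : Fin 2) : ∃ x, a x = s ∧ b x = t := by
  by_contra! hst
  exact h (pairPP_of_forall_ne hst)

lemma DependentState.not_induce_preconnected_ne {X F : Type} [Fintype X] [Fintype F]
    {chars : F → X → Fin 3} {c : F} {i : Fin 3} (hi : DependentState chars c i)
    {V : Type} {T : SimpleGraph V} {ℓ : V → F → Fin 3} (hT : T.IsAcyclic)
    (hreal : ∀ x, ∃ v, ∀ f, ℓ v f = chars f x)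
    (hconn : ∀ f s, (T.induce {v | ℓ v f = s}).Preconnected) :
    ¬ (T.induce {v | ℓ v c ≠ i}).Preconnected := by
  intro hcompl
  obtain ⟨d, j, k, hjk, hj, hk⟩ := hi
  have crossing : ∀ s, ¬ PairPP 2 (bin (chars c) i) (bin (chars d) s) →
      ({v | ℓ v d = s} ∩ {v | ℓ v c = i}).Nonempty ∧
        ({v | ℓ v d = s} \ {v | ℓ v c = i}).Nonempty := by
    intro s hs
    obtain ⟨x, hx⟩ := exists_eq_and_eq_of_not_pairPP hs 0 0
    obtain ⟨y, hy⟩ := exists_eq_and_eq_of_not_pairPP hs 1 0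
    obtain ⟨v, hv⟩ := hreal x
    obtain ⟨w, hw⟩ := hreal y
    simp only [bin] at hx hy
    refine ⟨⟨v, ?_, ?_⟩, ⟨w, ?_, ?_⟩⟩ <;> simp_all
  exact hT.not_disjoint_of_crossing (hconn c i) hcompl (hconn d j) (hconn d k)
    (crossing j hj).1 (crossing j hj).2 (crossing k hk).1 (crossing k hk).2
    (Set.disjoint_left.mpr fun v hvj hvk => hjk (hvj.symm.trans hvk))

theorem two_dependent_states_no_pp_general
    {X F : Type} [Fintype X] [Fintype F] (chars : F → X → Fin 3)
    (c : F) (i j : Fin 3) (hij : i ≠ j)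
    (hi : DependentState chars c i) (hj : DependentState chars c j) :
    ¬ PerfectPhylogeny 3 chars := by
  rintro ⟨V, _, T, ℓ, hT, hreal, hconn⟩
  have hi' := hi.not_induce_preconnected_ne hT.isAcyclic hreal hconn
  have hj' := hj.not_induce_preconnected_ne hT.isAcyclic hreal hconn
  obtain ⟨m, hmi, hmj⟩ := Fin.exists_ne_and_ne_of_two_lt i j (by norm_num)
  obtain ⟨vm, hvm⟩ : ∃ v, ℓ v c = m := by
    by_contra! h
    exact hi' (induce_preconnected_ne_of_forall_ne (hconn c) hmi h)
  obtain ⟨vj, hvj⟩ : ∃ v, ℓ v c = j := by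
    by_contra! h
    exact hi' (induce_preconnected_ne_of_forall_ne (hconn c) hij.symm h)
  obtain ⟨e, -, he, he'⟩ := (hT.connected.preconnected vm vj).some.exists_boundary_dart
    {v | ℓ v c = m} hvm (by simpa [hvj] using hmj.symm)
  by_cases hei : ℓ e.snd c = i
  · exact hj' (induce_preconnected_ne_of_adj (hconn c) e.adj (he ▸ hmj) (hei ▸ hij)
      (by rw [he, hei]; exact hmi))
  · exact hi' (induce_preconnected_ne_of_adj (hconn c) e.adj (he ▸ hmi) hei (he ▸ Ne.symm he'))

/-- a pairwise compatible family with a character having two distinct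
dependent states has no perfect phylogeny. -/
theorem two_dependent_states_no_pp
    {X F : Type} [Fintype X] [Fintype F] (chars : F → X → Fin 3)
    (hpc : PairwiseCompatible 3 chars) (c : F) (i j : Fin 3) (hij : i ≠ j)
    (hi : DependentState chars c i) (hj : DependentState chars c j) :
    ¬ PerfectPhylogeny 3 chars :=
  two_dependent_states_no_pp_general chars c i j hij hi hj
end
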